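/- Let ψ ∈ ℂᵐ⊗ℂⁿ (indexed by Fin m × Fin n) be a vector such that the partial transpose (ψψ†)^{t_A} of the rank-one matrix ψψ† is positive semidefinite. Then ψ is a product vector: there exist e ∈ ℂᵐ and f ∈ ℂⁿ with ψ = e⊗f. -/

import Mathlib

open Matrix ComplexOrder

noncomputable section

/-- Partial transpose of a bipartite matrix with respect to the first factor. -/
def ptA2 {m n : ℕ} (ρ : Matrix (Fin m × Fin n) (Fin m × Fin n) ℂ) :
    Matrix (Fin m × Fin n) (Fin m × Fin n) ℂ :=
  fun x y => ρ (y.1, x.2) (x.1, y.2)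

/-- The rank-one outer product `v v†`. -/
def outer {k : Type*} (v : k → ℂ) : Matrix k k ℂ := Matrix.vecMulVec v (star v)

/-!
View `ψ` as an `m × n` matrix. For any test vector `V`, put `B y z = ∑ b, V (b, y) * ψ (b, z)`;
the quadratic form of `(ψψ†)^{t_A}` at `V` is `∑ y z, conj (B y z) * B z y`. Choosing `V` built
from two rows `a, a'` of `ψ` makes `B y z` the antisymmetric `2 × 2` minor
`ψ (a, y) ψ (a', z) - ψ (a, z) ψ (a', y)`, so the form equals `-∑ |minor|²`. Positivity forces all
`2 × 2` minors of `ψ` to vanish, i.e. `ψ` has rank at most one.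
-/

lemma exists_eq_mul_of_minors_eq_zero {α β K : Type*} [Field K] (ψ : α × β → K)
    (h : ∀ a a' x x', ψ (a, x) * ψ (a', x') = ψ (a, x') * ψ (a', x)) :
    ∃ (e : α → K) (f : β → K), ψ = fun p => e p.1 * f p.2 := by
  obtain hz | ⟨⟨a₀, x₀⟩, h₀⟩ := forall_or_exists_not fun p => ψ p = 0
  · exact ⟨0, 0, funext fun p => by simp [hz p]⟩
  refine ⟨fun a => ψ (a, x₀), fun x => ψ (a₀, x) / ψ (a₀, x₀), ?_⟩
  funext ⟨a, x⟩
  field_simp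
  linear_combination h a₀ a x₀ x

lemma star_dotProduct_ptA2_outer_mulVec {m n : ℕ} (ψ V : Fin m × Fin n → ℂ) :
    star V ⬝ᵥ (ptA2 (outer ψ) *ᵥ V) =
      ∑ y, ∑ z, star (∑ b, V (b, y) * ψ (b, z)) * ∑ b, V (b, z) * ψ (b, y) := by
  simp only [dotProduct, mulVec, ptA2, outer, vecMulVec_apply, Fintype.sum_prod_type,
    Finset.mul_sum, Finset.sum_mul, star_sum, star_mul', Pi.star_apply]
  rw [Finset.sum_comm]
  refine Finset.sum_congr rfl fun y _ => ?_
  rw [Finset.sum_comm_cycle]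
  refine Finset.sum_congr rfl fun z _ => ?_
  rw [Finset.sum_comm]
  exact Finset.sum_congr rfl fun a' _ => Finset.sum_congr rfl fun a _ => by ring

lemma minor_eq_zero_of_posSemidef_ptA2_outer {m n : ℕ} {ψ : Fin m × Fin n → ℂ}
    (hppt : (ptA2 (outer ψ)).PosSemidef) (a a' : Fin m) (x x' : Fin n) :
    ψ (a, x) * ψ (a', x') = ψ (a, x') * ψ (a', x) := by
  set D : Fin n → Fin n → ℂ := fun y z => ψ (a, y) * ψ (a', z) - ψ (a, z) * ψ (a', y)
  have hanti : ∀ y z, D z y = -D y z := fun y z => by simp only [D]; ring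
  let V : Fin m × Fin n → ℂ := fun p =>
    (if p.1 = a' then ψ (a, p.2) else 0) - (if p.1 = a then ψ (a', p.2) else 0)
  have hV : ∀ y z, ∑ b, V (b, y) * ψ (b, z) = D y z := fun y z => by
    simp only [V, D, sub_mul, ite_mul, zero_mul, Finset.sum_sub_distrib, Finset.sum_ite_eq',
      Finset.mem_univ, ↓reduceIte]
    ring
  have hform : star V ⬝ᵥ (ptA2 (outer ψ) *ᵥ V) =
      ((-∑ y, ∑ z, Complex.normSq (D y z) : ℝ) : ℂ) := by
    rw [star_dotProduct_ptA2_outer_mulVec]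
    push_cast
    rw [← Finset.sum_neg_distrib]
    refine Finset.sum_congr rfl fun y _ => ?_
    rw [← Finset.sum_neg_distrib]
    refine Finset.sum_congr rfl fun z _ => ?_
    rw [hV, hV, hanti y z, mul_neg, Complex.normSq_eq_conj_mul_self]
    rfl
  have hle := hppt.dotProduct_mulVec_nonneg V
  rw [hform, Complex.zero_le_real, neg_nonneg] at hle
  have hterm : Complex.normSq (D x x') ≤ ∑ y, ∑ z, Complex.normSq (D y z) :=
    (Finset.single_le_sum (f := fun z => Complex.normSq (D x z))
      (fun _ _ => Complex.normSq_nonneg _) (Finset.mem_univ x')).trans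
    (Finset.single_le_sum (fun _ _ => Finset.sum_nonneg fun _ _ => Complex.normSq_nonneg _)
      (Finset.mem_univ x))
  have hD : D x x' = 0 :=
    Complex.normSq_eq_zero.mp (le_antisymm (hterm.trans hle) (Complex.normSq_nonneg _))
  exact sub_eq_zero.mp hD

/-- A vector whose rank-one projector has positive partial transpose is a product vector. -/
theorem pure_ppt_is_product (m n : ℕ) (ψ : Fin m × Fin n → ℂ)
    (hppt : (ptA2 (outer ψ)).PosSemidef) :
    ∃ (e : Fin m → ℂ) (f : Fin n → ℂ), ψ = fun x => e x.1 * f x.2 :=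
  exists_eq_mul_of_minors_eq_zero ψ (minor_eq_zero_of_posSemidef_ptA2_outer hppt)

end
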